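/- arXiv:1112.6220 — 3 statements merged into one kernel-verified Lean document; each statement's English description precedes it below -/
import Mathlib

section
/- In the full observation model, restricting attention to control laws of the form U^i_t = ḡ^i_t(X^i_t, Z_{1:t}, U_{1:t-1}) at all control stations i = 1,…,n is without loss of optimality: for every control strategy g of the general form U^i_t = g^i_t(Z_{1:t}, X^i_{1:t}, U_{1:t-1}) there exists a strategy ḡ in which each control law depends only on (X^i_t, Z_{1:t}, U_{1:t-1}) such that J(ḡ) ≤ J(g). -/
open scoped Classical

namespace ControlSharing

variable {n T : ℕ}
variable {Z : Type} [Fintype Z] [Nonempty Z]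
variable {X : Fin n → Type} [∀ i, Fintype (X i)] [∀ i, Nonempty (X i)]
variable {U : Fin n → Type} [∀ i, Fintype (U i)] [∀ i, Nonempty (U i)]
variable {W0 : Type} [Fintype W0] [Nonempty W0]
variable {W : Fin n → Type} [∀ i, Fintype (W i)] [∀ i, Nonempty (W i)]

/-- A probability weight function on a finite type. -/
def IsLaw {α : Type} [Fintype α] (P : α → ℝ) : Prop :=
  (∀ a, 0 ≤ P a) ∧ ∑ a, P a = 1

/-- Sample space of primitive random variables: the initial shared state `Z₁`, the initial
local states `X₁ⁱ`, the shared-dynamics noises `W⁰_t` and the local noises `Wⁱ_t`. -/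
abbrev Omega (T : ℕ) (Z : Type) (X : Fin n → Type) (W0 : Type) (W : Fin n → Type) : Type :=
  Z × (∀ i, X i) × (Fin T → W0) × (∀ i, Fin T → W i)

/-- The probability weight of a sample point: `Z₁ ~ P_Z`; conditionally on `Z₁` the initial
local states are independent, `X₁ⁱ ~ P_{Xⁱ|Z}(·|Z₁)`; all noises are independent with laws
`P_{W⁰}`, `P_{Wⁱ}`, independent of the initial states. -/
noncomputable def weight (PZ : Z → ℝ) (PX : ∀ i, Z → X i → ℝ) (PW0 : W0 → ℝ)
    (PW : ∀ i, W i → ℝ) (ω : Omega T Z X W0 W) : ℝ :=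
  PZ ω.1 * (∏ i, PX i ω.1 (ω.2.1 i)) * (∏ t, PW0 (ω.2.2.1 t)) *
    (∏ i, ∏ t, PW i (ω.2.2.2 i t))

/-- A general control strategy: station `i` chooses `Uⁱ_t = gⁱ_t(Z_{1:t}, Xⁱ_{1:t}, U_{1:t-1})`. -/
def Strategy (Z : Type) (X U : Fin n → Type) : Type :=
  ∀ (i : Fin n) (t : ℕ), (Fin (t + 1) → Z) → (Fin (t + 1) → X i) →
    (Fin t → ∀ j, U j) → U i

variable (f0 : ℕ → Z → (∀ j, U j) → W0 → Z)
variable (f : ∀ i, ℕ → Z → X i → (∀ j, U j) → W i → X i)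

/-- The closed-loop trajectory: histories `(Z_{1:t+1}, X_{1:t+1}, U_{1:t+1})` generated by the
dynamics `Z_{t+1} = f⁰_t(Z_t, U_t, W⁰_t)`, `Xⁱ_{t+1} = fⁱ_t(Z_t, Xⁱ_t, U_t, Wⁱ_t)` and the
strategy `g`. -/
noncomputable def traj (g : Strategy Z X U) (ω : Omega T Z X W0 W) :
    (t : ℕ) → (Fin (t + 1) → Z) × (∀ i, Fin (t + 1) → X i) × (Fin (t + 1) → ∀ j, U j)
  | 0 =>
    let zh : Fin 1 → Z := fun _ => ω.1
    let xh : ∀ i, Fin 1 → X i := fun i _ => ω.2.1 i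
    ⟨zh, xh, fun _ j => g j 0 zh (xh j) (fun s => s.elim0)⟩
  | t + 1 =>
    let prev := traj g ω t
    let ucur := prev.2.2 (Fin.last t)
    let znew := f0 t (prev.1 (Fin.last t)) ucur
      (if h : t < T then ω.2.2.1 ⟨t, h⟩ else Classical.arbitrary W0)
    let xnew : ∀ i, X i := fun i =>
      f i t (prev.1 (Fin.last t)) (prev.2.1 i (Fin.last t)) ucur
        (if h : t < T then ω.2.2.2 i ⟨t, h⟩ else Classical.arbitrary (W i))
    let zh : Fin (t + 2) → Z := Fin.snoc prev.1 znew
    let xh : ∀ i, Fin (t + 2) → X i := fun i => Fin.snoc (prev.2.1 i) (xnew i)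
    ⟨zh, xh, Fin.snoc prev.2.2 (fun j => g j (t + 1) zh (xh j) prev.2.2)⟩

/-- The shared state process `Z_t`. -/
noncomputable def Zp (g : Strategy Z X U) (t : ℕ) (ω : Omega T Z X W0 W) : Z :=
  (traj f0 f g ω t).1 (Fin.last t)

/-- The local state process `Xⁱ_t`. -/
noncomputable def Xp (g : Strategy Z X U) (i : Fin n) (t : ℕ) (ω : Omega T Z X W0 W) : X i :=
  (traj f0 f g ω t).2.1 i (Fin.last t)

/-- The action process `Uⁱ_t`. -/
noncomputable def Up (g : Strategy Z X U) (i : Fin n) (t : ℕ) (ω : Omega T Z X W0 W) : U i :=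
  (traj f0 f g ω t).2.2 (Fin.last t) i

/-- Probability of an event under a weight function. -/
noncomputable def Pr {Ω : Type} [Fintype Ω] (μ : Ω → ℝ) (A : Ω → Prop) : ℝ :=
  ∑ ω : Ω, if A ω then μ ω else 0

/-- Conditional probability `P(A | B)`. -/
noncomputable def CondPr {Ω : Type} [Fintype Ω] (μ : Ω → ℝ) (A B : Ω → Prop) : ℝ :=
  Pr μ (fun ω => A ω ∧ B ω) / Pr μ B

/-- Conditional expectation `E[h | B]`. -/
noncomputable def CondExp {Ω : Type} [Fintype Ω] (μ : Ω → ℝ) (h : Ω → ℝ) (B : Ω → Prop) : ℝ :=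
  (∑ ω : Ω, if B ω then μ ω * h ω else 0) / Pr μ B

/-- The expected total cost `J(g) = E[∑_{t=1}^T c_t(Z_t, X_t, U_t)]`. -/
noncomputable def J (c : ℕ → Z → (∀ i, X i) → (∀ i, U i) → ℝ)
    (μ : Omega T Z X W0 W → ℝ) (g : Strategy Z X U) : ℝ :=
  ∑ ω : Omega T Z X W0 W, μ ω *
    ∑ t ∈ Finset.range T,
      c t (Zp f0 f g t ω) (fun i => Xp f0 f g i t ω) (fun i => Up f0 f g i t ω)

end ControlSharing

/-!
Backward induction over the stages `s = T - 1, …, 0` and, at each stage, over the stations;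
laws after the horizon do not affect the cost. Suppose the laws of station `i` after time `s`
already ignore the local past. Exchanging station `i`'s private past (its initial local state
and its local noises before `s`) between two sample points with the same reduced information
`(Z_{1:s}, Xⁱ_s, U_{1:s-1})` keeps that information, exchanges the local histories `Xⁱ_{1:s}`,
preserves the product of the two probabilities and, once the action at `(i, s)` is fixed, does
not change the cost from `s` on. Hence, given the reduced information, the expected cost-to-go of
an action does not depend on `Xⁱ_{1:s}`, and an action minimizing it does at least as well as
`gⁱ_s`.
-/

namespace ControlSharing

section CellSums

variable {Ω γ δ : Type*} [Fintype Ω] (C : Ω → γ) (D : Ω → δ)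

noncomputable def cellSum (h : Ω → ℝ) (c : γ) (d : δ) : ℝ :=
  ∑ ω ∈ Finset.univ.filter (fun ω => C ω = c ∧ D ω = d), h ω

theorem sum_eq_sum_cellSum [Fintype γ] [Fintype δ] (G : Ω → γ → δ → ℝ) :
    ∑ ω, G ω (C ω) (D ω) = ∑ c, ∑ d, cellSum C D (fun ω => G ω c d) c d := by
  simp only [cellSum, Finset.sum_filter]
  rw [Finset.sum_congr rfl fun c _ => Finset.sum_comm, Finset.sum_comm]
  refine Finset.sum_congr rfl fun ω _ => ?_
  simp [ite_and]

variable {C D} {μ : Ω → ℝ}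

theorem cellSum_nonneg (hμ : ∀ ω, 0 ≤ μ ω) (c : γ) (d : δ) : 0 ≤ cellSum C D μ c d :=
  Finset.sum_nonneg fun ω _ => hμ ω

theorem cellSum_mul_eq_zero (hμ : ∀ ω, 0 ≤ μ ω) {c : γ} {d : δ}
    (h0 : cellSum C D μ c d = 0) (h : Ω → ℝ) : cellSum C D (fun ω => μ ω * h ω) c d = 0 := by
  rw [cellSum, Finset.sum_eq_zero_iff_of_nonneg fun ω _ => hμ ω] at h0
  exact Finset.sum_eq_zero fun ω hω => by rw [h0 ω hω, zero_mul]

theorem cellSum_exchange_of_swap (σ : Ω → Ω → Ω) (hσ : ∀ a b, σ (σ a b) (σ b a) = a)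
    (hC : ∀ a b, C a = C b → C (σ a b) = C a) (hD : ∀ a b, C a = C b → D (σ a b) = D b)
    (hμ : ∀ a b, C a = C b → μ (σ a b) * μ (σ b a) = μ a * μ b)
    {h : Ω → ℝ} (hh : ∀ a b, C a = C b → h (σ a b) = h a) (c : γ) (d d' : δ) :
    cellSum C D μ c d' * cellSum C D (fun ω => μ ω * h ω) c d =
      cellSum C D μ c d * cellSum C D (fun ω => μ ω * h ω) c d' := by
  let cell : δ → Finset Ω := fun d => Finset.univ.filter fun ω => C ω = c ∧ D ω = d
  have mem : ∀ {d d'} (p : Ω × Ω), p ∈ cell d' ×ˢ cell d →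
      (σ p.1 p.2, σ p.2 p.1) ∈ cell d ×ˢ cell d' := by
    rintro d d' ⟨a, b⟩ hp
    simp only [cell, Finset.mem_product, Finset.mem_filter, Finset.mem_univ, true_and] at hp ⊢
    obtain ⟨⟨rfl, rfl⟩, hb, rfl⟩ := hp
    exact ⟨⟨hC a b hb.symm, hD a b hb.symm⟩, (hC b a hb).trans hb, hD b a hb⟩
  simp only [cellSum, Finset.sum_mul_sum, ← Finset.sum_product']
  refine Finset.sum_nbij' (fun p => (σ p.1 p.2, σ p.2 p.1)) (fun p => (σ p.1 p.2, σ p.2 p.1))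
    mem mem (fun p _ => by simp [hσ]) (fun p _ => by simp [hσ]) ?_
  rintro ⟨a, b⟩ hp
  simp only [Finset.mem_product, Finset.mem_filter, Finset.mem_univ, true_and] at hp
  have hab : C a = C b := hp.1.1.trans hp.2.1.symm
  rw [hh b a hab.symm, ← mul_assoc, ← mul_assoc, hμ a b hab]

-- The factor is the conditional mean of `h` given `C = c`.
theorem cellSum_eq_mul_of_exchange [Fintype δ] (hμ : ∀ ω, 0 ≤ μ ω) {h : Ω → ℝ} {c : γ}
    (hex : ∀ d d', cellSum C D μ c d' * cellSum C D (fun ω => μ ω * h ω) c d =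
      cellSum C D μ c d * cellSum C D (fun ω => μ ω * h ω) c d') (d : δ) :
    cellSum C D (fun ω => μ ω * h ω) c d = cellSum C D μ c d *
      ((∑ d', cellSum C D (fun ω => μ ω * h ω) c d') / ∑ d', cellSum C D μ c d') := by
  have hsum : (∑ d', cellSum C D μ c d') * cellSum C D (fun ω => μ ω * h ω) c d =
      cellSum C D μ c d * ∑ d', cellSum C D (fun ω => μ ω * h ω) c d' := by
    rw [Finset.sum_mul, Finset.mul_sum]
    exact Finset.sum_congr rfl fun d' _ => hex d d'
  by_cases hN : ∑ d', cellSum C D μ c d' = 0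
  · have hd : cellSum C D μ c d = 0 :=
      (Finset.sum_eq_zero_iff_of_nonneg fun d' _ => cellSum_nonneg hμ c d').mp hN d
        (Finset.mem_univ d)
    rw [hd, zero_mul, cellSum_mul_eq_zero hμ hd]
  · field_simp
    linarith

-- `hV`: given `C = c`, the conditional mean of `F · u` does not depend on `D`.
theorem exists_le_of_cellSum_eq_mul [Fintype γ] [Fintype δ] {A : Type*} [Finite A] [Nonempty A]
    (hμ : ∀ ω, 0 ≤ μ ω) (F : Ω → A → ℝ) (V : γ → A → ℝ)
    (hV : ∀ c d u, cellSum C D (fun ω => μ ω * F ω u) c d = cellSum C D μ c d * V c u)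
    (φ : γ → δ → A) :
    ∃ ψ : γ → A, ∑ ω, μ ω * F ω (ψ (C ω)) ≤ ∑ ω, μ ω * F ω (φ (C ω) (D ω)) := by
  choose ψ hψ using fun c => Finite.exists_min (V c)
  refine ⟨ψ, ?_⟩
  rw [sum_eq_sum_cellSum C D (fun ω c _ => μ ω * F ω (ψ c)),
    sum_eq_sum_cellSum C D (fun ω c d => μ ω * F ω (φ c d))]
  simp only [hV]
  gcongr with c _ d _
  · exact cellSum_nonneg hμ c d
  · exact hψ c _

theorem exists_le_of_swap [Fintype γ] [Fintype δ] {A : Type*} [Finite A] [Nonempty A]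
    (hμ₀ : ∀ ω, 0 ≤ μ ω) (σ : Ω → Ω → Ω) (hσ : ∀ a b, σ (σ a b) (σ b a) = a)
    (hC : ∀ a b, C a = C b → C (σ a b) = C a) (hD : ∀ a b, C a = C b → D (σ a b) = D b)
    (hμ : ∀ a b, C a = C b → μ (σ a b) * μ (σ b a) = μ a * μ b)
    (F : Ω → A → ℝ) (hF : ∀ u a b, C a = C b → F (σ a b) u = F a u) (φ : γ → δ → A) :
    ∃ ψ : γ → A, ∑ ω, μ ω * F ω (ψ (C ω)) ≤ ∑ ω, μ ω * F ω (φ (C ω) (D ω)) :=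
  exists_le_of_cellSum_eq_mul hμ₀ F _
    (fun c d u => cellSum_eq_mul_of_exchange hμ₀
      (cellSum_exchange_of_swap σ hσ hC hD hμ (hF u) c) d) φ

end CellSums

theorem prod_mul_prod_eq_of_swap {ι : Type*} [Fintype ι] {β : ι → Type*} (F : ∀ j, β j → ℝ)
    {p q x y : ∀ j, β j} (h : ∀ j, p j = x j ∧ q j = y j ∨ p j = y j ∧ q j = x j) :
    (∏ j, F j (p j)) * ∏ j, F j (q j) = (∏ j, F j (x j)) * ∏ j, F j (y j) := by
  simp only [← Finset.prod_mul_distrib]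
  refine Finset.prod_congr rfl fun j _ => ?_
  rcases h j with ⟨hp, hq⟩ | ⟨hp, hq⟩ <;> rw [hp, hq]
  exact mul_comm _ _

section SamplePoints

variable {n T : ℕ} {Z : Type} {X : Fin n → Type} {W0 : Type} {W : Fin n → Type}

noncomputable def sharedNoise [Nonempty W0] (ω : Omega T Z X W0 W) (t : ℕ) : W0 :=
  if h : t < T then ω.2.2.1 ⟨t, h⟩ else Classical.arbitrary W0

noncomputable def localNoise [∀ i, Nonempty (W i)] (ω : Omega T Z X W0 W) (i : Fin n) (t : ℕ) :
    W i :=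
  if h : t < T then ω.2.2.2 i ⟨t, h⟩ else Classical.arbitrary (W i)

/-- The sample point with station `i`'s private past (its initial local state and its local
noises before time `s`) taken from `b` and everything else from `a`. -/
def swapPast (i : Fin n) (s : ℕ) (a b : Omega T Z X W0 W) : Omega T Z X W0 W :=
  (a.1, Function.update a.2.1 i (b.2.1 i), a.2.2.1,
    Function.update a.2.2.2 i fun t => if (t : ℕ) < s then b.2.2.2 i t else a.2.2.2 i t)

variable {i : Fin n} {s : ℕ} {a b : Omega T Z X W0 W}

theorem swapPast_swapPast : swapPast i s (swapPast i s a b) (swapPast i s b a) = a := by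
  refine Prod.ext rfl (Prod.ext ?_ (Prod.ext rfl ?_)) <;> funext j <;>
    rcases eq_or_ne j i with rfl | hj <;> simp [swapPast, *]
  funext t
  split_ifs <;> rfl

theorem localNoise_swapPast_of_ne [∀ i, Nonempty (W i)] {j : Fin n} (hj : j ≠ i) (t : ℕ) :
    localNoise (swapPast i s a b) j t = localNoise a j t := by
  simp [localNoise, swapPast, hj]

theorem localNoise_swapPast_of_lt [∀ i, Nonempty (W i)] {t : ℕ} (ht : t < s) :
    localNoise (swapPast i s a b) i t = localNoise b i t := by
  simp [localNoise, swapPast, ht]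

theorem localNoise_swapPast_of_le [∀ i, Nonempty (W i)] {t : ℕ} (ht : s ≤ t) :
    localNoise (swapPast i s a b) i t = localNoise a i t := by
  simp [localNoise, swapPast, Nat.not_lt.mpr ht]

variable {PZ : Z → ℝ} {PX : ∀ i, Z → X i → ℝ} {PW0 : W0 → ℝ} {PW : ∀ i, W i → ℝ}

theorem weight_nonneg (hPZ : ∀ z, 0 ≤ PZ z) (hPX : ∀ i z x, 0 ≤ PX i z x) (hPW0 : ∀ w, 0 ≤ PW0 w)
    (hPW : ∀ i w, 0 ≤ PW i w) (ω : Omega T Z X W0 W) : 0 ≤ weight PZ PX PW0 PW ω := by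
  unfold weight
  exact mul_nonneg (mul_nonneg (mul_nonneg (hPZ _) (Finset.prod_nonneg fun i _ => hPX i _ _))
    (Finset.prod_nonneg fun t _ => hPW0 _))
    (Finset.prod_nonneg fun i _ => Finset.prod_nonneg fun t _ => hPW i _)

theorem weight_swapPast (hab : a.1 = b.1) :
    weight PZ PX PW0 PW (swapPast i s a b) * weight PZ PX PW0 PW (swapPast i s b a) =
      weight PZ PX PW0 PW a * weight PZ PX PW0 PW b := by
  have hX : (∏ j, PX j a.1 ((swapPast i s a b).2.1 j)) * ∏ j, PX j a.1 ((swapPast i s b a).2.1 j)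
      = (∏ j, PX j a.1 (a.2.1 j)) * ∏ j, PX j a.1 (b.2.1 j) :=
    prod_mul_prod_eq_of_swap _ fun j => by rcases eq_or_ne j i with rfl | hj <;> simp [swapPast, *]
  have hW : (∏ j, ∏ t, PW j ((swapPast i s a b).2.2.2 j t)) *
      ∏ j, ∏ t, PW j ((swapPast i s b a).2.2.2 j t) =
        (∏ j, ∏ t, PW j (a.2.2.2 j t)) * ∏ j, ∏ t, PW j (b.2.2.2 j t) := by
    simp only [← Fintype.prod_prod_type']
    refine prod_mul_prod_eq_of_swap (fun p : Fin n × Fin T => PW p.1) fun ⟨j, t⟩ => ?_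
    rcases eq_or_ne j i with rfl | hj
    · by_cases ht : (t : ℕ) < s <;> simp [swapPast, ht]
    · simp [swapPast, hj]
  simp only [weight]
  rw [show (swapPast i s b a).1 = a.1 from hab.symm, ← hab]
  calc _ = PZ a.1 * PZ a.1 * ((∏ t, PW0 (a.2.2.1 t)) * ∏ t, PW0 (b.2.2.1 t)) *
        ((∏ j, PX j a.1 ((swapPast i s a b).2.1 j)) * ∏ j, PX j a.1 ((swapPast i s b a).2.1 j)) *
        ((∏ j, ∏ t, PW j ((swapPast i s a b).2.2.2 j t)) *
          ∏ j, ∏ t, PW j ((swapPast i s b a).2.2.2 j t)) := by simp only [swapPast]; ring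
    _ = _ := by rw [hX, hW]; ring

end SamplePoints

section Dynamics

variable {n T : ℕ} {Z : Type} {X U : Fin n → Type} {W0 : Type} [Nonempty W0]
  {W : Fin n → Type} [∀ i, Nonempty (W i)]
  (f0 : ℕ → Z → (∀ j, U j) → W0 → Z) (f : ∀ i, ℕ → Z → X i → (∀ j, U j) → W i → X i)

theorem Zp_succ (h : Strategy Z X U) (t : ℕ) (ω : Omega T Z X W0 W) :
    Zp f0 f h (t + 1) ω = f0 t (Zp f0 f h t ω) (fun j => Up f0 f h j t ω) (sharedNoise ω t) := by
  simp [Zp, Up, traj, sharedNoise]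

theorem Xp_succ (h : Strategy Z X U) (i : Fin n) (t : ℕ) (ω : Omega T Z X W0 W) :
    Xp f0 f h i (t + 1) ω =
      f i t (Zp f0 f h t ω) (Xp f0 f h i t ω) (fun j => Up f0 f h j t ω) (localNoise ω i t) := by
  simp [Zp, Xp, Up, traj, localNoise]

theorem traj_eq (h : Strategy Z X U) (ω : Omega T Z X W0 W) (t : ℕ) :
    traj f0 f h ω t =
      (fun r : Fin (t + 1) => Zp f0 f h r ω, fun j (r : Fin (t + 1)) => Xp f0 f h j r ω,
        fun (r : Fin (t + 1)) k => Up f0 f h k r ω) := by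
  induction t with
  | zero =>
    refine Prod.ext (funext fun r => ?_) (Prod.ext (funext fun j => funext fun r => ?_)
      (funext fun r => ?_)) <;> obtain rfl := Fin.fin_one_eq_zero r <;> rfl
  | succ t ih =>
    refine Prod.ext (funext fun r => ?_) (Prod.ext (funext fun j => funext fun r => ?_)
      (funext fun r => ?_)) <;> refine Fin.lastCases ?_ (fun q => ?_) r <;>
    first | rfl | simp [traj, ih]

theorem Up_eq (h : Strategy Z X U) (j : Fin n) (t : ℕ) (ω : Omega T Z X W0 W) :
    Up f0 f h j t ω = h j t (fun r => Zp f0 f h r ω) (fun r => Xp f0 f h j r ω)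
      (fun r k => Up f0 f h k r ω) := by
  cases t with
  | zero =>
    show h j 0 (traj f0 f h ω 0).1 ((traj f0 f h ω 0).2.1 j) (fun s => s.elim0) = _
    rw [traj_eq]
    exact congrArg _ (Subsingleton.elim _ _)
  | succ t =>
    have : Up f0 f h j (t + 1) ω = h j (t + 1) (traj f0 f h ω (t + 1)).1
        ((traj f0 f h ω (t + 1)).2.1 j) (traj f0 f h ω t).2.2 := by
      simp [Up, traj]
    rw [this, traj_eq, traj_eq]

variable {f0 f} {h₁ h₂ : Strategy Z X U} {ω₁ ω₂ : Omega T Z X W0 W}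

theorem Zp_congr (h0 : ω₁.1 = ω₂.1) : ∀ t, (∀ r < t,
    sharedNoise ω₁ r = sharedNoise ω₂ r ∧ ∀ j, Up f0 f h₁ j r ω₁ = Up f0 f h₂ j r ω₂) →
      Zp f0 f h₁ t ω₁ = Zp f0 f h₂ t ω₂
  | 0, _ => h0
  | t + 1, H => by
    rw [Zp_succ, Zp_succ, Zp_congr h0 t fun r hr => H r (by omega),
      (H t t.lt_succ_self).1, funext (H t t.lt_succ_self).2]

theorem Xp_congr {j : Fin n} {t₀ : ℕ} (h0 : Xp f0 f h₁ j t₀ ω₁ = Xp f0 f h₂ j t₀ ω₂) :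
    ∀ t, t₀ ≤ t → (∀ r, t₀ ≤ r → r < t → Zp f0 f h₁ r ω₁ = Zp f0 f h₂ r ω₂ ∧
      localNoise ω₁ j r = localNoise ω₂ j r ∧ ∀ k, Up f0 f h₁ k r ω₁ = Up f0 f h₂ k r ω₂) →
        Xp f0 f h₁ j t ω₁ = Xp f0 f h₂ j t ω₂ := by
  intro t ht
  induction t, ht using Nat.le_induction with
  | base => exact fun _ => h0
  | succ t ht ih =>
    intro H
    obtain ⟨hz, hw, hu⟩ := H t ht t.lt_succ_self
    rw [Xp_succ, Xp_succ, ih fun r h1 h2 => H r h1 (by omega), hz, hw, funext hu]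

theorem Up_eq_of_hist {j : Fin n} {t : ℕ} (hz : ∀ r ≤ t, Zp f0 f h₁ r ω₁ = Zp f0 f h₂ r ω₂)
    (hx : ∀ r ≤ t, Xp f0 f h₁ j r ω₁ = Xp f0 f h₂ j r ω₂)
    (hu : ∀ r < t, ∀ k, Up f0 f h₁ k r ω₁ = Up f0 f h₂ k r ω₂) :
    Up f0 f h₁ j t ω₁ = h₁ j t (fun r => Zp f0 f h₂ r ω₂) (fun r => Xp f0 f h₂ j r ω₂)
      (fun r k => Up f0 f h₂ k r ω₂) := by
  rw [Up_eq]
  congr 1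
  · exact funext fun r => hz r (Nat.lt_succ_iff.mp r.isLt)
  · exact funext fun r => hx r (Nat.lt_succ_iff.mp r.isLt)
  · exact funext fun r => funext (hu r r.isLt)

theorem Zp_eq_of_Up_eq {ω : Omega T Z X W0 W} {t : ℕ}
    (hU : ∀ r < t, ∀ j, Up f0 f h₁ j r ω = Up f0 f h₂ j r ω) :
    Zp f0 f h₁ t ω = Zp f0 f h₂ t ω :=
  Zp_congr rfl t fun r hr => ⟨rfl, hU r hr⟩

theorem Xp_eq_of_Up_eq {ω : Omega T Z X W0 W} {t : ℕ}
    (hU : ∀ r < t, ∀ j, Up f0 f h₁ j r ω = Up f0 f h₂ j r ω) (j : Fin n) :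
    Xp f0 f h₁ j t ω = Xp f0 f h₂ j t ω :=
  Xp_congr (h₁ := h₁) (h₂ := h₂) (t₀ := 0) rfl t t.zero_le fun r _ hr =>
    ⟨Zp_eq_of_Up_eq fun q hq => hU q (hq.trans hr), rfl, hU r hr⟩

theorem Up_eq_of_agree_on_path {ω : Omega T Z X W0 W} {t : ℕ}
    (H : ∀ j r, r < t → h₂ j r (fun q => Zp f0 f h₁ q ω) (fun q => Xp f0 f h₁ j q ω)
      (fun q k => Up f0 f h₁ k q ω) = Up f0 f h₁ j r ω) :
    ∀ r < t, ∀ j, Up f0 f h₂ j r ω = Up f0 f h₁ j r ω := by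
  induction t with
  | zero => intro r hr; omega
  | succ t ih =>
    have ih := ih fun j r hr => H j r (by omega)
    intro r hr j
    rcases Nat.lt_succ_iff_lt_or_eq.mp hr with hr | rfl
    · exact ih r hr j
    · rw [Up_eq_of_hist (fun q hq => Zp_eq_of_Up_eq fun p hp => ih p (by omega))
        (fun q hq => Xp_eq_of_Up_eq (fun p hp => ih p (by omega)) j) ih, H j r hr]

theorem Up_eq_of_eqOn {ω : Omega T Z X W0 W} {t : ℕ} (H : ∀ j r, r < t → h₁ j r = h₂ j r) :
    ∀ r < t, ∀ j, Up f0 f h₁ j r ω = Up f0 f h₂ j r ω :=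
  Up_eq_of_agree_on_path fun j r hr => by rw [H j r hr, Up_eq]

def IgnoresLocalPast (h : Strategy Z X U) (i : Fin n) (t : ℕ) : Prop :=
  ∀ (zh : Fin (t + 1) → Z) (xh xh' : Fin (t + 1) → X i) (uh : Fin t → ∀ j, U j),
    xh (Fin.last t) = xh' (Fin.last t) → h i t zh xh uh = h i t zh xh' uh

variable (f0 f) in
/-- `(Z_{1:s}, Xⁱ_s, U_{1:s-1})`, the information used by the laws in the reduced class. -/
noncomputable def reducedInfo (h : Strategy Z X U) (i : Fin n) (s : ℕ) (ω : Omega T Z X W0 W) :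
    (Fin (s + 1) → Z) × X i × (Fin s → ∀ j, U j) :=
  (fun r => Zp f0 f h r ω, Xp f0 f h i s ω, fun r k => Up f0 f h k r ω)

theorem reducedInfo_eq_iff {h : Strategy Z X U} {i : Fin n} {s : ℕ} {a b : Omega T Z X W0 W} :
    reducedInfo f0 f h i s a = reducedInfo f0 f h i s b ↔
      (∀ r ≤ s, Zp f0 f h r a = Zp f0 f h r b) ∧ Xp f0 f h i s a = Xp f0 f h i s b ∧
        ∀ r < s, ∀ k, Up f0 f h k r a = Up f0 f h k r b := by
  simp only [reducedInfo, Prod.ext_iff, funext_iff, Fin.forall_iff, Nat.lt_succ_iff]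

theorem reducedInfo_eq_of_eqOn {h₁ h₂ : Strategy Z X U} {i : Fin n} {s : ℕ}
    (H : ∀ j r, r < s → h₁ j r = h₂ j r) (ω : Omega T Z X W0 W) :
    reducedInfo f0 f h₁ i s ω = reducedInfo f0 f h₂ i s ω := by
  have hU := Up_eq_of_eqOn (f0 := f0) (f := f) (ω := ω) H
  simp only [reducedInfo, Prod.ext_iff, funext_iff]
  exact ⟨fun r => Zp_eq_of_Up_eq fun q hq => hU q (by omega), Xp_eq_of_Up_eq hU i,
    fun r => hU r r.isLt⟩

variable {h : Strategy Z X U} {i : Fin n} {s t : ℕ} {a b : Omega T Z X W0 W}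

theorem Zp_swapPast (hU : ∀ r < t, ∀ j, Up f0 f h j r (swapPast i s a b) = Up f0 f h j r a) :
    Zp f0 f h t (swapPast i s a b) = Zp f0 f h t a :=
  Zp_congr (by rfl) t fun r hr => ⟨rfl, hU r hr⟩

theorem Xp_swapPast_of_ne {j : Fin n} (hj : j ≠ i)
    (hU : ∀ r < t, ∀ j, Up f0 f h j r (swapPast i s a b) = Up f0 f h j r a) :
    Xp f0 f h j t (swapPast i s a b) = Xp f0 f h j t a :=
  Xp_congr (t₀ := 0) (by exact Function.update_of_ne hj _ _) t t.zero_le fun r _ hr =>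
    ⟨Zp_swapPast fun q hq => hU q (hq.trans hr), localNoise_swapPast_of_ne hj r, hU r hr⟩

theorem Xp_swapPast_of_le (hab : reducedInfo f0 f h i s a = reducedInfo f0 f h i s b)
    (hts : t ≤ s) (hU : ∀ r < t, ∀ j, Up f0 f h j r (swapPast i s a b) = Up f0 f h j r a) :
    Xp f0 f h i t (swapPast i s a b) = Xp f0 f h i t b := by
  obtain ⟨hz, -, hu⟩ := reducedInfo_eq_iff.mp hab
  refine Xp_congr (t₀ := 0) (by exact Function.update_self _ _ _) t t.zero_le fun r _ hr =>
    ⟨?_, localNoise_swapPast_of_lt (by omega), fun k => ?_⟩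
  · rw [Zp_swapPast fun q hq => hU q (by omega), hz r (by omega)]
  · rw [hU r hr, hu r (by omega)]

theorem Xp_swapPast_of_ge (hab : reducedInfo f0 f h i s a = reducedInfo f0 f h i s b)
    (hst : s ≤ t) (hU : ∀ r < t, ∀ j, Up f0 f h j r (swapPast i s a b) = Up f0 f h j r a) :
    Xp f0 f h i t (swapPast i s a b) = Xp f0 f h i t a := by
  have hs : Xp f0 f h i s (swapPast i s a b) = Xp f0 f h i s a := by
    rw [Xp_swapPast_of_le hab le_rfl fun r hr => hU r (by omega),
      (reducedInfo_eq_iff.mp hab).2.1]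
  exact Xp_congr hs t hst fun r hsr hr =>
    ⟨Zp_swapPast fun q hq => hU q (by omega), localNoise_swapPast_of_le hsr, hU r hr⟩

theorem Up_swapPast (hab : reducedInfo f0 f h i s a = reducedInfo f0 f h i s b) :
    ∀ t, (∀ r, s ≤ r → r < t → IgnoresLocalPast h i r) →
      ∀ r < t, ∀ j, Up f0 f h j r (swapPast i s a b) = Up f0 f h j r a := by
  obtain ⟨hz, -, hu⟩ := reducedInfo_eq_iff.mp hab
  intro t
  induction t with
  | zero => intro _ r hr; omega
  | succ t ih =>
    intro hR r hr j
    have hU := ih fun r h1 h2 => hR r h1 (by omega)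
    rcases Nat.lt_succ_iff_lt_or_eq.mp hr with hr | rfl
    · exact hU r hr j
    have hZ : ∀ q ≤ r, Zp f0 f h q (swapPast i s a b) = Zp f0 f h q a :=
      fun q hq => Zp_swapPast fun p hp => hU p (by omega)
    rcases eq_or_ne j i with rfl | hj
    · rcases Nat.lt_or_ge r s with hrs | hsr
      -- before `s`, station `i` follows `b`, whose public history agrees with that of `a`
      · rw [Up_eq_of_hist (ω₂ := b) (fun q hq => (hZ q hq).trans (hz q (by omega)))
          (fun q hq => Xp_swapPast_of_le hab (by omega) fun p hp => hU p (by omega))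
          (fun q hq k => (hU q hq k).trans (hu q (by omega) k)), ← Up_eq f0 f h j r b, hu r hrs]
      -- from `s` on, its law sees only `Xⁱ_r`, which agrees with that of `a`
      · rw [Up_eq, Up_eq f0 f h j r a, funext fun q : Fin (r + 1) => hZ q (by omega),
          funext fun q : Fin r => funext (hU q q.isLt)]
        exact hR r hsr r.lt_succ_self _ _ _ _ (Xp_swapPast_of_ge hab hsr hU)
    · rw [Up_eq_of_hist hZ (fun q hq => Xp_swapPast_of_ne hj fun p hp => hU p (by omega)) hU,
        ← Up_eq f0 f h j r a]

end Dynamics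

section Improvement

variable {n T : ℕ} {Z : Type} {X U : Fin n → Type} {W0 : Type} [Nonempty W0]
  {W : Fin n → Type} [∀ i, Nonempty (W i)]
  {f0 : ℕ → Z → (∀ j, U j) → W0 → Z} {f : ∀ i, ℕ → Z → X i → (∀ j, U j) → W i → X i}
  {c : ℕ → Z → (∀ i, X i) → (∀ i, U i) → ℝ}

def Strategy.replace (g : Strategy Z X U) (i : Fin n) (s : ℕ)
    (ℓ : (Fin (s + 1) → Z) → (Fin (s + 1) → X i) → (Fin s → ∀ j, U j) → U i) : Strategy Z X U :=
  Function.update g i (Function.update (g i) s ℓ)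

variable {g h : Strategy Z X U} {i : Fin n} {s : ℕ}
  {ℓ : (Fin (s + 1) → Z) → (Fin (s + 1) → X i) → (Fin s → ∀ j, U j) → U i}

theorem Strategy.replace_self : g.replace i s ℓ i s = ℓ := by
  unfold Strategy.replace
  erw [Function.update_self, Function.update_self]

theorem Strategy.replace_of_ne {j : Fin n} {t : ℕ} (hjt : (j, t) ≠ (i, s)) :
    g.replace i s ℓ j t = g j t := by
  unfold Strategy.replace
  rcases eq_or_ne j i with rfl | hj
  · erw [Function.update_self, Function.update_of_ne fun ht => hjt (by rw [ht])]
  · erw [Function.update_of_ne hj]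

theorem IgnoresLocalPast.replace {j : Fin n} {t : ℕ} (hg : IgnoresLocalPast g j t)
    (hjt : (j, t) ≠ (i, s)) : IgnoresLocalPast (g.replace i s ℓ) j t := by
  simpa only [IgnoresLocalPast, Strategy.replace_of_ne hjt] using hg

theorem ignoresLocalPast_replace_self (ψ : (Fin (s + 1) → Z) × X i × (Fin s → ∀ j, U j) → U i) :
    IgnoresLocalPast (g.replace i s fun zh xh uh => ψ (zh, xh (Fin.last s), uh)) i s := by
  intro zh xh xh' uh hx
  simp only [Strategy.replace_self, hx]

variable (f0 f c) in
noncomputable def stageCost (h : Strategy Z X U) (t : ℕ) (ω : Omega T Z X W0 W) : ℝ :=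
  c t (Zp f0 f h t ω) (fun j => Xp f0 f h j t ω) (fun j => Up f0 f h j t ω)

variable (f0 f c) in
noncomputable def costFrom (h : Strategy Z X U) (s : ℕ) (ω : Omega T Z X W0 W) : ℝ :=
  ∑ t ∈ (Finset.range T).filter (s ≤ ·), stageCost f0 f c h t ω

theorem stageCost_eq_of_Up_eq {h₁ h₂ : Strategy Z X U} {ω : Omega T Z X W0 W} {t : ℕ}
    (hU : ∀ r < t + 1, ∀ j, Up f0 f h₁ j r ω = Up f0 f h₂ j r ω) :
    stageCost f0 f c h₁ t ω = stageCost f0 f c h₂ t ω := by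
  rw [stageCost, stageCost, Zp_eq_of_Up_eq (t := t) fun r hr => hU r (by omega),
    funext (Xp_eq_of_Up_eq (t := t) fun r hr => hU r (by omega)), funext (hU t t.lt_succ_self)]

section Swap

variable {a b : Omega T Z X W0 W} (hab : reducedInfo f0 f g i s a = reducedInfo f0 f g i s b)
include hab

theorem reducedInfo_swapPast :
    reducedInfo f0 f g i s (swapPast i s a b) = reducedInfo f0 f g i s a := by
  have hU := Up_swapPast hab s fun r h1 h2 => absurd h2 (by omega)
  exact reducedInfo_eq_iff.mpr ⟨fun r hr => Zp_swapPast fun q hq => hU q (by omega),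
    (Xp_swapPast_of_le hab le_rfl hU).trans (reducedInfo_eq_iff.mp hab).2.1.symm, hU⟩

theorem Xp_swapPast_eq_right {r : ℕ} (hr : r ≤ s) :
    Xp f0 f g i r (swapPast i s a b) = Xp f0 f g i r b :=
  Xp_swapPast_of_le hab hr fun q hq =>
    Up_swapPast hab s (fun r h1 h2 => absurd h2 (by omega)) q (by omega)

theorem costFrom_swapPast (hg : ∀ t, s ≤ t → IgnoresLocalPast g i t) :
    costFrom f0 f c g s (swapPast i s a b) = costFrom f0 f c g s a := by
  have hU t := Up_swapPast hab t fun r h1 _ => hg r h1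
  refine Finset.sum_congr rfl fun t ht => ?_
  have hst : s ≤ t := (Finset.mem_filter.mp ht).2
  have hX : ∀ j, Xp f0 f g j t (swapPast i s a b) = Xp f0 f g j t a := fun j => by
    rcases eq_or_ne j i with rfl | hj
    · exact Xp_swapPast_of_ge hab hst (hU t)
    · exact Xp_swapPast_of_ne hj (hU t)
  simp only [stageCost, Zp_swapPast (hU t), hX, hU (t + 1) t t.lt_succ_self]

end Swap

section AgreeOff

variable (hh : ∀ j t, (j, t) ≠ (i, s) → h j t = g j t) (ω : Omega T Z X W0 W)
include hh

theorem Up_eq_of_agree_off :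
    Up f0 f h i s ω = h i s (fun r => Zp f0 f g r ω) (fun r => Xp f0 f g i r ω)
      (fun r k => Up f0 f g k r ω) := by
  have hU : ∀ r < s, ∀ j, Up f0 f h j r ω = Up f0 f g j r ω :=
    Up_eq_of_eqOn fun j r hr => hh j r (ne_of_apply_ne Prod.snd hr.ne)
  exact Up_eq_of_hist (fun r hr => Zp_eq_of_Up_eq fun q hq => hU q (by omega))
    (fun r hr => Xp_eq_of_Up_eq (fun q hq => hU q (by omega)) i) hU

theorem Up_replace_const {t : ℕ} :
    ∀ r < t, ∀ j, Up f0 f (g.replace i s fun _ _ _ => Up f0 f h i s ω) j r ω = Up f0 f h j r ω :=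
  Up_eq_of_agree_on_path fun j r _ => by
    by_cases hjr : (j, r) = (i, s)
    · obtain ⟨rfl, rfl⟩ := Prod.mk.inj hjr
      rw [Strategy.replace_self]
    · rw [Strategy.replace_of_ne hjr, ← hh j r hjr, Up_eq]

end AgreeOff

section Finite

variable [Fintype Z] [∀ i, Fintype (X i)] [Fintype W0] [∀ i, Fintype (W i)]

theorem J_eq_sum_stageCost (μ : Omega T Z X W0 W → ℝ) (h : Strategy Z X U) :
    J f0 f c μ h = ∑ ω, μ ω * ∑ t ∈ Finset.range T, stageCost f0 f c h t ω := rfl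

theorem J_eq_of_eqOn
    {h₁ h₂ : Strategy Z X U} (μ : Omega T Z X W0 W → ℝ) (H : ∀ j t, t < T → h₁ j t = h₂ j t) :
    J f0 f c μ h₁ = J f0 f c μ h₂ :=
  Finset.sum_congr rfl fun ω _ => congrArg _ <| Finset.sum_congr rfl fun t ht =>
    stageCost_eq_of_Up_eq <| Up_eq_of_eqOn fun j r hr =>
      H j r (by have := Finset.mem_range.mp ht; omega)

theorem J_eq_add_of_agree_off (hh : ∀ j t, (j, t) ≠ (i, s) → h j t = g j t)
    (μ : Omega T Z X W0 W → ℝ) :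
    J f0 f c μ h = ∑ ω, μ ω * ∑ t ∈ (Finset.range T).filter (· < s), stageCost f0 f c g t ω +
      ∑ ω, μ ω * costFrom f0 f c (g.replace i s fun _ _ _ => h i s (fun r => Zp f0 f g r ω)
        (fun r => Xp f0 f g i r ω) (fun r k => Up f0 f g k r ω)) s ω := by
  rw [J_eq_sum_stageCost, ← Finset.sum_add_distrib]
  refine Finset.sum_congr rfl fun ω _ => ?_
  rw [← mul_add, costFrom, ← Up_eq_of_agree_off hh ω,
    ← Finset.sum_filter_add_sum_filter_not (Finset.range T) (· < s)]
  simp only [not_lt]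
  congr 2
  · refine Finset.sum_congr rfl fun t ht => stageCost_eq_of_Up_eq <| Up_eq_of_eqOn fun j r hr =>
      hh j r (ne_of_apply_ne Prod.snd ?_)
    have := (Finset.mem_filter.mp ht).2
    omega
  · exact Finset.sum_congr rfl fun t _ => (stageCost_eq_of_Up_eq (Up_replace_const hh ω)).symm

section Backward

variable [∀ i, Fintype (U i)] [∀ i, Nonempty (U i)]
  {PZ : Z → ℝ} {PX : ∀ i, Z → X i → ℝ} {PW0 : W0 → ℝ} {PW : ∀ i, W i → ℝ}
  (hμ : ∀ ω : Omega T Z X W0 W, 0 ≤ weight PZ PX PW0 PW ω)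
include hμ

theorem exists_replace_le
    (hg : ∀ t, s < t → IgnoresLocalPast g i t) :
    ∃ ψ : (Fin (s + 1) → Z) × X i × (Fin s → ∀ j, U j) → U i,
      J f0 f c (weight (T := T) PZ PX PW0 PW)
          (g.replace i s fun zh xh uh => ψ (zh, xh (Fin.last s), uh)) ≤
        J f0 f c (weight (T := T) PZ PX PW0 PW) g := by
  let gm : U i → Strategy Z X U := fun u => g.replace i s fun _ _ _ => u
  have hgm u : ∀ j r, r < s → gm u j r = g j r := fun j r hr =>
    Strategy.replace_of_ne (ne_of_apply_ne Prod.snd hr.ne)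
  have hgmR u : ∀ t, s ≤ t → IgnoresLocalPast (gm u) i t := fun t hst => by
    rcases hst.eq_or_lt with rfl | hst
    · exact ignoresLocalPast_replace_self fun _ => u
    · exact (hg t hst).replace (ne_of_apply_ne Prod.snd hst.ne')
  obtain ⟨ψ, hψ⟩ := exists_le_of_swap (C := reducedInfo f0 f g i s)
    (D := fun ω (r : Fin (s + 1)) => Xp f0 f g i r ω) hμ (swapPast i s)
    (fun _ _ => swapPast_swapPast) (fun _ _ hab => reducedInfo_swapPast hab)
    (fun _ _ hab => funext fun r => Xp_swapPast_eq_right hab (Nat.lt_succ_iff.mp r.isLt))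
    (fun _ _ hab => weight_swapPast ((reducedInfo_eq_iff.mp hab).1 0 s.zero_le))
    (fun ω u => costFrom f0 f c (gm u) s ω)
    (fun u a b hab => costFrom_swapPast
      (by rwa [reducedInfo_eq_of_eqOn (hgm u), reducedInfo_eq_of_eqOn (hgm u)]) (hgmR u))
    (fun c d => g i s c.1 d c.2.2)
  refine ⟨ψ, ?_⟩
  rw [J_eq_add_of_agree_off (h := g.replace i s _) (fun _ _ => Strategy.replace_of_ne) _,
    J_eq_add_of_agree_off (h := g) (i := i) (s := s) (fun _ _ _ => rfl) _, Strategy.replace_self]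
  exact add_le_add le_rfl hψ

theorem exists_le_ignoresLocalPast_at
    (hg : ∀ j t, s < t → IgnoresLocalPast g j t) :
    ∃ g' : Strategy Z X U, (∀ j t, s ≤ t → IgnoresLocalPast g' j t) ∧
      J f0 f c (weight (T := T) PZ PX PW0 PW) g' ≤ J f0 f c (weight (T := T) PZ PX PW0 PW) g := by
  suffices ∀ S : Finset (Fin n), ∃ g' : Strategy Z X U,
      (∀ j t, s < t → IgnoresLocalPast g' j t) ∧ (∀ j ∈ S, IgnoresLocalPast g' j s) ∧
        J f0 f c (weight (T := T) PZ PX PW0 PW) g' ≤ J f0 f c (weight (T := T) PZ PX PW0 PW) g by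
    obtain ⟨g', hlater, hnow, hJ⟩ := this Finset.univ
    exact ⟨g', fun j t hst => hst.eq_or_lt.elim (fun h => h ▸ hnow j (Finset.mem_univ j))
      (hlater j t), hJ⟩
  intro S
  induction S using Finset.induction_on with
  | empty => exact ⟨g, hg, by simp, le_rfl⟩
  | insert i S _ ih =>
    obtain ⟨g₁, hlater, hnow, hJ₁⟩ := ih
    obtain ⟨ψ, hJ₂⟩ := exists_replace_le hμ (hlater i)
    refine ⟨_, fun j t hst => (hlater j t hst).replace (ne_of_apply_ne Prod.snd hst.ne'),
      fun j hj => ?_, hJ₂.trans hJ₁⟩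
    rcases eq_or_ne j i with rfl | hji
    · exact ignoresLocalPast_replace_self ψ
    · exact (hnow j ((Finset.mem_insert.mp hj).resolve_left hji)).replace
        (ne_of_apply_ne Prod.fst hji)

theorem exists_le_ignoresLocalPast_from
    (hs : s ≤ T) (g : Strategy Z X U) :
    ∃ g' : Strategy Z X U, (∀ j t, s ≤ t → IgnoresLocalPast g' j t) ∧
      J f0 f c (weight (T := T) PZ PX PW0 PW) g' ≤ J f0 f c (weight (T := T) PZ PX PW0 PW) g := by
  induction hs using Nat.decreasingInduction with
  | self =>
    refine ⟨fun j t => if t < T then g j t else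
      fun zh xh uh => g j t zh (fun _ => xh (Fin.last t)) uh,
      fun j t ht zh xh xh' uh hx => ?_, (J_eq_of_eqOn _ fun j t ht => if_pos ht).le⟩
    simp only [if_neg (Nat.not_lt.mpr ht), hx]
  | of_succ s _ ih =>
    obtain ⟨g₁, h₁, hJ₁⟩ := ih
    obtain ⟨g₂, h₂, hJ₂⟩ := exists_le_ignoresLocalPast_at hμ fun j t hst => h₁ j t hst
    exact ⟨g₂, h₂, hJ₂.trans hJ₁⟩

end Backward

end Finite

end Improvement

variable {n T : ℕ}
variable {Z : Type} [Fintype Z] [Nonempty Z]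
variable {X : Fin n → Type} [∀ i, Fintype (X i)] [∀ i, Nonempty (X i)]
variable {U : Fin n → Type} [∀ i, Fintype (U i)] [∀ i, Nonempty (U i)]
variable {W0 : Type} [Fintype W0] [Nonempty W0]
variable {W : Fin n → Type} [∀ i, Fintype (W i)] [∀ i, Nonempty (W i)]
variable (f0 : ℕ → Z → (∀ j, U j) → W0 → Z)
variable (f : ∀ i, ℕ → Z → X i → (∀ j, U j) → W i → X i)

/-- Proposition 1 of Mahajan, "Optimal decentralized control of coupled
subsystems with control sharing": in the full observation model, restricting attention to
control laws of the form `Uⁱ_t = ḡⁱ_t(Xⁱ_t, Z_{1:t}, U_{1:t-1})` at all control stations is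
without loss of optimality: for every strategy `g` of the general form
`Uⁱ_t = gⁱ_t(Z_{1:t}, Xⁱ_{1:t}, U_{1:t-1})` there is a strategy `ḡ` whose control laws do not
depend on the past local states `Xⁱ_{1:t-1}` (i.e. they are invariant under changing the local
state history off its current value) with `J(ḡ) ≤ J(g)`. -/
theorem full_obs_irrelevant_local_history
    (PZ : Z → ℝ) (PX : ∀ i, Z → X i → ℝ) (PW0 : W0 → ℝ) (PW : ∀ i, W i → ℝ)
    (hPZ : IsLaw PZ) (hPX : ∀ i z, IsLaw (PX i z))
    (hPW0 : IsLaw PW0) (hPW : ∀ i, IsLaw (PW i))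
    (c : ℕ → Z → (∀ i, X i) → (∀ i, U i) → ℝ)
    (g : Strategy Z X U) :
    ∃ gbar : Strategy Z X U,
      (∀ (i : Fin n) (t : ℕ) (zh : Fin (t + 1) → Z) (xh xh' : Fin (t + 1) → X i)
          (uh : Fin t → ∀ j, U j), xh (Fin.last t) = xh' (Fin.last t) →
            gbar i t zh xh uh = gbar i t zh xh' uh) ∧
      J f0 f c (weight (T := T) PZ PX PW0 PW) gbar ≤
        J f0 f c (weight (T := T) PZ PX PW0 PW) g := by
  have hμ := weight_nonneg (T := T) hPZ.1 (fun i z => (hPX i z).1) hPW0.1 fun i => (hPW i).1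
  obtain ⟨gbar, hgbar, hJ⟩ := exists_le_ignoresLocalPast_from hμ T.zero_le g
  exact ⟨gbar, fun i t => hgbar i t t.zero_le, hJ⟩

end ControlSharing
end

section
/- In the full observation model, for an arbitrary but fixed control strategy g, the local states of all subsystems are conditionally independent given the history of shared states and control actions: for every t = 1,…,T and every realization (z_{1:t}, u_{1:t}) with P(Z_{1:t}=z_{1:t}, U_{1:t}=u_{1:t}) > 0 and every x_{1:t} = (x^1_{1:t},…,x^n_{1:t}), one has P(X_{1:t}=x_{1:t} | Z_{1:t}=z_{1:t}, U_{1:t}=u_{1:t}) = ∏_{i=1}^n P(X^i_{1:t}=x^i_{1:t} | Z_{1:t}=z_{1:t}, U_{1:t}=u_{1:t}). -/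
open scoped Classical

namespace ControlSharing

variable {n T : ℕ}
variable {Z : Type} [Fintype Z] [Nonempty Z]
variable {X : Fin n → Type} [∀ i, Fintype (X i)] [∀ i, Nonempty (X i)]
variable {U : Fin n → Type} [∀ i, Fintype (U i)] [∀ i, Nonempty (U i)]
variable {W0 : Type} [Fintype W0] [Nonempty W0]
variable {W : Fin n → Type} [∀ i, Fintype (W i)] [∀ i, Nonempty (W i)]

variable (f0 : ℕ → Z → (∀ j, U j) → W0 → Z)
variable (f : ∀ i, ℕ → Z → X i → (∀ j, U j) → W i → X i)

/-!
Fix the realized shared history `(z, u)`. Along it, the local state `Xⁱ` is a deterministic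
function (`localPath`) of station `i`'s own primitives `(X₁ⁱ, Wⁱ)`, and so is the event that
station `i`'s actions agree with `u`; the shared states agree with `z` iff `Z₁ = z₁` and the
shared noise is compatible with `(z, u)`. This is proved time step by time step, since each
step only looks at the history up to that time. Hence the conditioning event `B`, intersected
with the local path events `Aᵢ` of any set `S` of stations, is a rectangle in the independent
primitive variables, so `P(⋂_{i ∈ S} Aᵢ ∩ B) = c ∏_{i ∈ S} aᵢ ∏_{i ∉ S} eᵢ`. Dividing by
`P(B) = c ∏ᵢ eᵢ`, both sides of the claimed identity equal `∏ᵢ aᵢ / eᵢ`.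
-/

theorem condPr_forall_eq_prod_of_factorization {ι : Type*} {Ω : Type} [Fintype ι] [DecidableEq ι]
    [Fintype Ω] (μ : Ω → ℝ) (A : ι → Ω → Prop) (B : Ω → Prop) (c : ℝ) (a e : ι → ℝ)
    (hfac : ∀ S : Finset ι,
      Pr μ (fun ω => (∀ i ∈ S, A i ω) ∧ B ω) = c * ∏ i, if i ∈ S then a i else e i)
    (hB : Pr μ B ≠ 0) :
    CondPr μ (fun ω => ∀ i, A i ω) B = ∏ i, CondPr μ (A i) B := by
  have hPrB : Pr μ B = c * ∏ i, e i := by simpa using hfac ∅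
  rw [hPrB] at hB
  have hc : c ≠ 0 := left_ne_zero_of_mul hB
  have he : ∀ i, e i ≠ 0 := fun i =>
    Finset.prod_ne_zero_iff.1 (right_ne_zero_of_mul hB) i (Finset.mem_univ i)
  have hmarginal (i : ι) : CondPr μ (A i) B = a i / e i := by
    have hi := hfac {i}
    simp only [Finset.mem_singleton, forall_eq] at hi
    rw [CondPr, hi, hPrB, mul_div_mul_left _ _ hc, ← Finset.mul_prod_erase _ _ (Finset.mem_univ i),
      ← Finset.mul_prod_erase _ e (Finset.mem_univ i), if_pos rfl,
      Finset.prod_congr rfl fun j hj => if_neg (Finset.ne_of_mem_erase hj),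
      mul_div_mul_right _ _ (Finset.prod_ne_zero_iff.2 fun j _ => he j)]
  have hjoint := hfac Finset.univ
  simp only [Finset.mem_univ, forall_const, if_true] at hjoint
  rw [CondPr, hjoint, hPrB, mul_div_mul_left _ _ hc, ← Finset.prod_div_distrib]
  exact Finset.prod_congr rfl fun i _ => (hmarginal i).symm

theorem sum_pi_sum_pi_prod_eq_prod_sum_sum {ι R : Type*} [Fintype ι] [DecidableEq ι]
    [CommSemiring R] {α β : ι → Type*} [∀ i, Fintype (α i)] [∀ i, Fintype (β i)]
    (F : ∀ i, α i → β i → R) :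
    ∑ a : ∀ i, α i, ∑ b : ∀ i, β i, ∏ i, F i (a i) (b i) = ∏ i, ∑ x, ∑ y, F i x y := by
  simp only [Fintype.prod_sum]

theorem Pr_eq_sum_ite {Ω : Type} [Fintype Ω] (μ : Ω → ℝ) (A : Ω → Prop) [DecidablePred A] :
    Pr μ A = ∑ ω, if A ω then μ ω else 0 := by
  unfold Pr
  congr! 3

theorem forall_le_iff_of_forall_lt {P Q : ℕ → Prop} (h : ∀ s, (∀ r < s, P r) → (P s ↔ Q s))
    (t : ℕ) : (∀ s ≤ t, P s) ↔ ∀ s ≤ t, Q s := by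
  refine ⟨fun hP s hs => (h s fun r hr => hP r (by omega)).1 (hP s hs), fun hQ s hs => ?_⟩
  induction s using Nat.strong_induction_on with
  | _ s ih => exact (h s fun r hr => ih r hr (by omega)).2 (hQ s hs)

theorem apply_eq_apply_last_of_castSucc {α : Type*} (h : ∀ t : ℕ, Fin (t + 1) → α)
    (hh : ∀ t (k : Fin (t + 1)), h (t + 1) k.castSucc = h t k) (t : ℕ) (k : Fin (t + 1)) :
    h t k = h k (Fin.last k) := by
  induction t with
  | zero => rw [Fin.fin_one_eq_zero k]; rfl
  | succ t ih =>
    induction k using Fin.lastCases with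
    | last => rfl
    | cast j => rw [hh, ih]; rfl

section ClosedLoop

omit [Fintype Z] [Nonempty Z] [∀ i, Fintype (X i)] [∀ i, Nonempty (X i)] [∀ i, Fintype (U i)]
  [∀ i, Nonempty (U i)] [Fintype W0] [∀ i, Fintype (W i)]

noncomputable def extendNoise {α : Type} [Nonempty α] (a : Fin T → α) (s : ℕ) : α :=
  if h : s < T then a ⟨s, h⟩ else Classical.arbitrary α

section Trajectory

variable (g : Strategy Z X U) (ω : Omega T Z X W0 W)

theorem traj_fst (t : ℕ) : (traj f0 f g ω t).1 = fun k : Fin (t + 1) => Zp f0 f g k ω :=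
  funext <| apply_eq_apply_last_of_castSucc (fun t => (traj f0 f g ω t).1)
    (fun _ _ => by simp [traj]) t

theorem traj_snd_fst (i : Fin n) (t : ℕ) :
    (traj f0 f g ω t).2.1 i = fun k : Fin (t + 1) => Xp f0 f g i k ω :=
  funext <| apply_eq_apply_last_of_castSucc (fun t => (traj f0 f g ω t).2.1 i)
    (fun _ _ => by simp [traj]) t

theorem traj_snd_snd (t : ℕ) :
    (traj f0 f g ω t).2.2 = fun (k : Fin (t + 1)) j => Up f0 f g j k ω :=
  funext <| apply_eq_apply_last_of_castSucc (fun t => (traj f0 f g ω t).2.2)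
    (fun _ _ => by simp [traj]) t

theorem Zp_succ_s1 (s : ℕ) :
    Zp f0 f g (s + 1) ω =
      f0 s (Zp f0 f g s ω) (fun j => Up f0 f g j s ω) (extendNoise ω.2.2.1 s) := by
  simp [Zp, Up, traj, extendNoise]

theorem Xp_succ_s1 (i : Fin n) (s : ℕ) :
    Xp f0 f g i (s + 1) ω =
      f i s (Zp f0 f g s ω) (Xp f0 f g i s ω) (fun j => Up f0 f g j s ω)
        (extendNoise (ω.2.2.2 i) s) := by
  simp [Xp, Zp, Up, traj, extendNoise]

theorem Up_eq_strategy (i : Fin n) (s : ℕ) :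
    Up f0 f g i s ω =
      g i s (fun k : Fin (s + 1) => Zp f0 f g k ω) (fun k : Fin (s + 1) => Xp f0 f g i k ω)
        (fun (k : Fin s) j => Up f0 f g j k ω) := by
  rw [← traj_fst, ← traj_snd_fst]
  cases s with
  | zero => exact congrArg _ (funext fun k => k.elim0)
  | succ s => rw [← traj_snd_snd]; simp [Up, traj]

end Trajectory

-- The path station `i`'s local state follows when the shared states and actions are `z`, `u`.
noncomputable def localPath (i : Fin n) (z : ℕ → Z) (u : ℕ → ∀ j, U j) (x₀ : X i)
    (w : Fin T → W i) : ℕ → X i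
  | 0 => x₀
  | s + 1 => f i s (z s) (localPath i z u x₀ w s) (u s) (extendNoise w s)

variable (g : Strategy Z X U) (z : ℕ → Z) (u : ℕ → ∀ j, U j)

def AgreesAt (s : ℕ) (ω : Omega T Z X W0 W) : Prop :=
  Zp f0 f g s ω = z s ∧ ∀ j, Up f0 f g j s ω = u s j

def SharedStepAgrees (z₁ : Z) (a : Fin T → W0) : ℕ → Prop
  | 0 => z₁ = z 0
  | s + 1 => f0 s (z s) (u s) (extendNoise a s) = z (s + 1)

def ActionAgrees (i : Fin n) (s : ℕ) (p : X i × (Fin T → W i)) : Prop :=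
  g i s (fun k => z k) (fun k => localPath f i z u p.1 p.2 k) (fun k => u k) = u s i

variable {f0 f g z u} (ω : Omega T Z X W0 W)

theorem Xp_eq_localPath {s : ℕ} (hprev : ∀ r < s, AgreesAt f0 f g z u r ω) (i : Fin n) :
    Xp f0 f g i s ω = localPath f i z u (ω.2.1 i) (ω.2.2.2 i) s := by
  induction s with
  | zero => rfl
  | succ s ih =>
    obtain ⟨hz, hu⟩ := hprev s s.lt_succ_self
    rw [Xp_succ_s1, ih fun r hr => hprev r (by omega), hz, funext hu]
    rfl

theorem agreesAt_iff {s : ℕ} (hprev : ∀ r < s, AgreesAt f0 f g z u r ω) :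
    AgreesAt f0 f g z u s ω ↔ SharedStepAgrees f0 z u ω.1 ω.2.2.1 s ∧
      ∀ i, ActionAgrees f g z u i s (ω.2.1 i, ω.2.2.2 i) := by
  have hZ : Zp f0 f g s ω = z s ↔ SharedStepAgrees f0 z u ω.1 ω.2.2.1 s := by
    cases s with
    | zero => rfl
    | succ s =>
      obtain ⟨hz, hu⟩ := hprev s s.lt_succ_self
      rw [Zp_succ_s1, hz, funext hu]
      rfl
  have hU (hz : Zp f0 f g s ω = z s) (i : Fin n) :
      Up f0 f g i s ω = u s i ↔ ActionAgrees f g z u i s (ω.2.1 i, ω.2.2.2 i) := by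
    have hzk (k : Fin (s + 1)) : Zp f0 f g k ω = z k := by
      rcases (Nat.lt_succ_iff.1 k.is_lt).lt_or_eq with hk | hk
      · exact (hprev k hk).1
      · rw [hk, hz]
    rw [Up_eq_strategy, funext hzk,
      funext fun k : Fin (s + 1) => Xp_eq_localPath ω (fun r hr => hprev r (by omega)) i,
      funext fun k : Fin s => funext (hprev k k.is_lt).2]
    rfl
  exact ⟨fun ⟨hz, hu⟩ => ⟨hZ.1 hz, fun i => (hU hz i).1 (hu i)⟩,
    fun ⟨h₀, ha⟩ => ⟨hZ.2 h₀, fun i => (hU (hZ.2 h₀) i).2 (ha i)⟩⟩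

theorem history_iff (t : ℕ) :
    ((∀ s ≤ t, Zp f0 f g s ω = z s) ∧ ∀ s ≤ t, ∀ j, Up f0 f g j s ω = u s j) ↔
      (∀ s ≤ t, SharedStepAgrees f0 z u ω.1 ω.2.2.1 s) ∧
        ∀ i, ∀ s ≤ t, ActionAgrees f g z u i s (ω.2.1 i, ω.2.2.2 i) := by
  refine forall₂_and.symm.trans <|
    (forall_le_iff_of_forall_lt (fun s => agreesAt_iff ω) t).trans <| forall₂_and.trans ?_
  exact and_congr_right' ⟨fun h i s hs => h s hs i, fun h s hs i => h i s hs⟩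

theorem localStates_and_history_iff (x : ∀ i, ℕ → X i) (S : Finset (Fin n)) (t : ℕ) :
    ((∀ i ∈ S, ∀ s ≤ t, Xp f0 f g i s ω = x i s) ∧
        (∀ s ≤ t, Zp f0 f g s ω = z s) ∧ ∀ s ≤ t, ∀ j, Up f0 f g j s ω = u s j) ↔
      (∀ s ≤ t, SharedStepAgrees f0 z u ω.1 ω.2.2.1 s) ∧
        ∀ i, (∀ s ≤ t, ActionAgrees f g z u i s (ω.2.1 i, ω.2.2.2 i)) ∧
          (i ∈ S → ∀ s ≤ t, localPath f i z u (ω.2.1 i) (ω.2.2.2 i) s = x i s) := by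
  have hX (hB : (∀ s ≤ t, Zp f0 f g s ω = z s) ∧ ∀ s ≤ t, ∀ j, Up f0 f g j s ω = u s j)
      (i : Fin n) (s : ℕ) (hs : s ≤ t) :
      Xp f0 f g i s ω = localPath f i z u (ω.2.1 i) (ω.2.2.2 i) s :=
    Xp_eq_localPath ω (fun r hr => ⟨hB.1 r (by omega), hB.2 r (by omega)⟩) i
  constructor
  · rintro ⟨hxS, hB⟩
    obtain ⟨hshared, hact⟩ := (history_iff ω t).1 hB
    exact ⟨hshared, fun i => ⟨hact i, fun hi s hs => hX hB i s hs ▸ hxS i hi s hs⟩⟩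
  · rintro ⟨hshared, hloc⟩
    have hB := (history_iff ω t).2 ⟨hshared, fun i => (hloc i).1⟩
    exact ⟨fun i hi s hs => (hX hB i s hs).trans ((hloc i).2 hi s hs), hB⟩

end ClosedLoop

section Factorization

omit [Nonempty Z] [∀ i, Nonempty (X i)] [∀ i, Fintype (U i)] [∀ i, Nonempty (U i)]

noncomputable def noiseWeight {α : Type} (P : α → ℝ) (a : Fin T → α) : ℝ :=
  ∏ s, P (a s)

noncomputable def localWeight (PX : ∀ i, Z → X i → ℝ) (PW : ∀ i, W i → ℝ) (i : Fin n)
    (z₁ : Z) (p : X i × (Fin T → W i)) : ℝ :=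
  PX i z₁ p.1 * noiseWeight (PW i) p.2

omit [Nonempty W0] [∀ i, Nonempty (W i)] in
theorem Pr_weight_rectangle (PZ : Z → ℝ) (PX : ∀ i, Z → X i → ℝ) (PW0 : W0 → ℝ)
    (PW : ∀ i, W i → ℝ) (z₀ : Z) (P : Z → (Fin T → W0) → Prop)
    (Q : ∀ i, X i × (Fin T → W i) → Prop) (hP : ∀ z₁ a, P z₁ a → z₁ = z₀) :
    Pr (weight PZ PX PW0 PW) (fun ω => P ω.1 ω.2.2.1 ∧ ∀ i, Q i (ω.2.1 i, ω.2.2.2 i)) =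
      PZ z₀ * Pr (noiseWeight PW0) (P z₀) * ∏ i, Pr (localWeight PX PW i z₀) (Q i) := by
  have hpoint (z₁ : Z) (xv : ∀ i, X i) (a : Fin T → W0) (wv : ∀ i, Fin T → W i) :
      (if P z₁ a ∧ ∀ i, Q i (xv i, wv i) then weight PZ PX PW0 PW (z₁, xv, a, wv) else 0) =
        (if z₁ = z₀ then PZ z₁ else 0) * ((if P z₀ a then noiseWeight PW0 a else 0) *
          ∏ i, if Q i (xv i, wv i) then localWeight PX PW i z₀ (xv i, wv i) else 0) := by
    rw [Fintype.prod_ite_zero, ite_zero_mul_ite_zero, ite_zero_mul_ite_zero]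
    by_cases hz : z₁ = z₀
    · subst hz
      simp only [true_and]
      split_ifs
      · simp only [weight, localWeight, noiseWeight, Finset.prod_mul_distrib]
        ring
      · rfl
    · have hPz : ¬P z₁ a := fun h => hz (hP _ _ h)
      simp [hz, hPz]
  rw [Pr_eq_sum_ite]
  simp only [Pr, Fintype.sum_prod_type, hpoint, ← Finset.mul_sum, ← Finset.sum_mul,
    Finset.sum_ite_eq', Finset.mem_univ, if_true]
  rw [sum_pi_sum_pi_prod_eq_prod_sum_sum
      fun i x y => if Q i (x, y) then localWeight PX PW i z₀ (x, y) else 0,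
    mul_assoc]

theorem Pr_localStates_and_history (PZ : Z → ℝ) (PX : ∀ i, Z → X i → ℝ) (PW0 : W0 → ℝ)
    (PW : ∀ i, W i → ℝ) (g : Strategy Z X U) (z : ℕ → Z) (u : ℕ → ∀ j, U j)
    (x : ∀ i, ℕ → X i) (t : ℕ) (S : Finset (Fin n)) :
    Pr (weight (T := T) PZ PX PW0 PW) (fun ω => (∀ i ∈ S, ∀ s ≤ t, Xp f0 f g i s ω = x i s) ∧
        (∀ s ≤ t, Zp f0 f g s ω = z s) ∧ ∀ s ≤ t, ∀ j, Up f0 f g j s ω = u s j) =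
      PZ (z 0) *
        Pr (noiseWeight (T := T) PW0) (fun a => ∀ s ≤ t, SharedStepAgrees f0 z u (z 0) a s) *
        ∏ i, if i ∈ S then
          Pr (localWeight (T := T) PX PW i (z 0)) fun p => (∀ s ≤ t, ActionAgrees f g z u i s p) ∧
            ∀ s ≤ t, localPath f i z u p.1 p.2 s = x i s
        else
          Pr (localWeight (T := T) PX PW i (z 0)) fun p => ∀ s ≤ t, ActionAgrees f g z u i s p := by
  rw [congrArg (Pr _) (funext fun ω => propext (localStates_and_history_iff ω x S t))]
  refine (Pr_weight_rectangle PZ PX PW0 PW (z 0)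
    (fun z₁ a => ∀ s ≤ t, SharedStepAgrees f0 z u z₁ a s)
    (fun i p => (∀ s ≤ t, ActionAgrees f g z u i s p) ∧
      (i ∈ S → ∀ s ≤ t, localPath f i z u p.1 p.2 s = x i s))
    fun z₁ a h => h 0 (Nat.zero_le t)).trans (congrArg _ (Finset.prod_congr rfl fun i _ => ?_))
  split_ifs with hi <;> simp [hi]

end Factorization

theorem full_obs_conditional_independence
    (PZ : Z → ℝ) (PX : ∀ i, Z → X i → ℝ) (PW0 : W0 → ℝ) (PW : ∀ i, W i → ℝ)
    (g : Strategy Z X U)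
    (t : ℕ) (z : ℕ → Z) (u : ℕ → ∀ j, U j)
    (hpos : 0 < Pr (weight (T := T) PZ PX PW0 PW)
      (fun ω => (∀ s ≤ t, Zp f0 f g s ω = z s) ∧ (∀ s ≤ t, ∀ j, Up f0 f g j s ω = u s j)))
    (x : ∀ i, ℕ → X i) :
    CondPr (weight (T := T) PZ PX PW0 PW)
        (fun ω => ∀ i, ∀ s ≤ t, Xp f0 f g i s ω = x i s)
        (fun ω => (∀ s ≤ t, Zp f0 f g s ω = z s) ∧ (∀ s ≤ t, ∀ j, Up f0 f g j s ω = u s j)) =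
      ∏ i, CondPr (weight (T := T) PZ PX PW0 PW)
        (fun ω => ∀ s ≤ t, Xp f0 f g i s ω = x i s)
        (fun ω => (∀ s ≤ t, Zp f0 f g s ω = z s) ∧ (∀ s ≤ t, ∀ j, Up f0 f g j s ω = u s j)) :=
  condPr_forall_eq_prod_of_factorization _ (fun i ω => ∀ s ≤ t, Xp f0 f g i s ω = x i s) _ _ _ _
    (Pr_localStates_and_history f0 f PZ PX PW0 PW g z u x t) hpos.ne'

end ControlSharing
end

section
/- Let p ∈ (0,1] satisfy (1−p)² < p. Define A^n p = 1 − (1−p)^{n+1} for n ≥ 0 (so Ap = A¹p = 1 − (1−p)²), and set J = Ap, v* = 2 − Ap, v⁰ = p, vⁿ = Aⁿp for n ≥ 1, and v^∞ = 1. Then these values solve the average-reward dynamic programming fixed-point equations of the symmetric two-user multiaccess broadcast system: v* + J = max{1 + v^∞, v*}; v⁰ + J = max{p + v¹, 2p(1−p) + p²v* + (1−p²)v⁰}; for every n ≥ 1, vⁿ + J = max{p + v^{n+1}, Aⁿp + v¹, p + Aⁿp − 2p·Aⁿp + p·Aⁿp·v* + (1 − p·Aⁿp)·v⁰}; and v^∞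 + J = max{p + v^∞, 1 + v¹, 1 − p + p·v* + (1−p)·v⁰}. -/
/-!
In each equation the left-hand side equals one branch of the maximum, and every other branch
falls short of it by an explicit product: `p (Aⁿp - p)` at `(p, Aⁿp)` for action `(1,0)`,
`p² (p - (1-p)²)` at `(p,p)`, `p² ((3 - p) Aⁿp - 1)` at `(p, Aⁿp)` and `p² (2 - p)` at `(p,1)` for
action `(1,1)`. As `Aⁿp` increases from `A⁰p = p`, these are nonnegative for `0 ≤ p ≤ 1` with
`(1-p)² ≤ p`, the latter being `1 ≤ p (3 - p)`.
-/

namespace MultiaccessBroadcast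

/-- The paper's `Aⁿp`, the `n`-fold image of `p` under the belief update `x ↦ p + (1 - p) x`. -/
def beliefIter (p : ℝ) (n : ℕ) : ℝ := 1 - (1 - p) ^ (n + 1)

variable {p : ℝ}

@[simp]
lemma beliefIter_zero : beliefIter p 0 = p := by
  simp [beliefIter]

lemma beliefIter_succ (n : ℕ) : beliefIter p (n + 1) = p + (1 - p) * beliefIter p n := by
  simp only [beliefIter]
  ring

lemma beliefIter_one : beliefIter p 1 = 2 * p - p ^ 2 := by
  simp only [beliefIter]
  ring

lemma beliefIter_monotone (h0 : 0 ≤ p) (h1 : p ≤ 1) : Monotone (beliefIter p) :=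
  fun _ _ hmn => sub_le_sub_left
    (pow_le_pow_of_le_one (sub_nonneg.2 h1) (by linarith) (Nat.succ_le_succ hmn)) 1

lemma le_beliefIter (h0 : 0 ≤ p) (h1 : p ≤ 1) (n : ℕ) : p ≤ beliefIter p n := by
  simpa using beliefIter_monotone h0 h1 (Nat.zero_le n)

lemma one_le_mul_three_sub_of_sq_le (h : (1 - p) ^ 2 ≤ p) : 1 ≤ p * (3 - p) := by
  nlinarith

lemma bellman_star (h0 : 0 ≤ p) (h1 : p ≤ 1) :
    2 - beliefIter p 1 + beliefIter p 1 = max (1 + 1) (2 - beliefIter p 1) := by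
  rw [max_eq_left (by linarith [le_beliefIter h0 h1 1])]
  ring

lemma bellman_zero (h : (1 - p) ^ 2 ≤ p) :
    p + beliefIter p 1 = max (p + beliefIter p 1)
      (2 * p * (1 - p) + p ^ 2 * (2 - beliefIter p 1) + (1 - p ^ 2) * p) := by
  have collision_loss : 0 ≤ p ^ 2 * (p - (1 - p) ^ 2) :=
    mul_nonneg (sq_nonneg p) (sub_nonneg.2 h)
  rw [max_eq_left (by rw [beliefIter_one]; linear_combination collision_loss)]

lemma add_beliefIter_succ_le (h0 : 0 ≤ p) (h1 : p ≤ 1) (n : ℕ) :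
    p + beliefIter p (n + 1) ≤ beliefIter p n + beliefIter p 1 := by
  have wait_loss : 0 ≤ p * (beliefIter p n - p) :=
    mul_nonneg h0 (sub_nonneg.2 (le_beliefIter h0 h1 n))
  rw [beliefIter_succ, beliefIter_succ, beliefIter_zero]
  linarith

lemma collision_value_le (p a : ℝ) (ha : 1 ≤ (3 - p) * a) :
    p + a - 2 * p * a + p * a * (2 - beliefIter p 1) + (1 - p * a) * p ≤ a + beliefIter p 1 := by
  have collision_loss : 0 ≤ p ^ 2 * ((3 - p) * a - 1) :=
    mul_nonneg (sq_nonneg p) (sub_nonneg.2 ha)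
  rw [beliefIter_one]
  linear_combination collision_loss

lemma bellman_succ (h1 : p ≤ 1) (h : (1 - p) ^ 2 ≤ p) (n : ℕ) :
    beliefIter p n + beliefIter p 1 = max (p + beliefIter p (n + 1))
      (max (beliefIter p n + beliefIter p 1)
        (p + beliefIter p n - 2 * p * beliefIter p n + p * beliefIter p n * (2 - beliefIter p 1)
          + (1 - p * beliefIter p n) * p)) := by
  have h0 : 0 ≤ p := (sq_nonneg _).trans h
  have three_sub_mul_ge : 1 ≤ (3 - p) * beliefIter p n := by
    nlinarith [one_le_mul_three_sub_of_sq_le h, le_beliefIter h0 h1 n]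
  rw [max_eq_left (collision_value_le p _ three_sub_mul_ge), max_eq_right (add_beliefIter_succ_le h0 h1 n)]

lemma bellman_infty (h0 : 0 ≤ p) (h1 : p ≤ 1) :
    1 + beliefIter p 1 = max (p + 1)
      (max (1 + beliefIter p 1) (1 - p + p * (2 - beliefIter p 1) + (1 - p) * p)) := by
  have collision_loss : 0 ≤ p ^ 2 * (2 - p) := mul_nonneg (sq_nonneg p) (by linarith)
  have transmit_both_le : 1 - p + p * (2 - beliefIter p 1) + (1 - p) * p ≤ 1 + beliefIter p 1 := by
    rw [beliefIter_one]
    linear_combination collision_loss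
  have transmit_first_le : p + 1 ≤ 1 + beliefIter p 1 := by linarith [le_beliefIter h0 h1 1]
  rw [max_eq_left transmit_both_le, max_eq_right transmit_first_le]

end MultiaccessBroadcast

open MultiaccessBroadcast in
theorem MAB_DP_solution_case1_general (p : ℝ) (hp1 : p ≤ 1)
    (hcase : (1 - p) ^ 2 < p) :
    let A : ℕ → ℝ := fun n => 1 - (1 - p) ^ (n + 1)
    let J : ℝ := A 1
    let vs : ℝ := 2 - A 1
    let v0 : ℝ := p
    let v : ℕ → ℝ := fun n => A n
    let vinf : ℝ := 1
    (vs + J = max (1 + vinf) vs) ∧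
    (v0 + J = max (p + v 1) (2 * p * (1 - p) + p ^ 2 * vs + (1 - p ^ 2) * v0)) ∧
    (∀ n : ℕ, 1 ≤ n →
      v n + J = max (p + v (n + 1)) (max (A n + v 1)
        (p + A n - 2 * p * A n + p * A n * vs + (1 - p * A n) * v0))) ∧
    (vinf + J = max (p + vinf) (max (1 + v 1) (1 - p + p * vs + (1 - p) * v0))) := by
  intro A J vs v0 v vinf
  have hp0 : 0 ≤ p := (sq_nonneg _).trans hcase.le
  exact ⟨bellman_star hp0 hp1, bellman_zero hcase.le,
    fun n _ => bellman_succ hp1 hcase.le n, bellman_infty hp0 hp1⟩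

/-- Lemma 9, case 1, of Mahajan, "Optimal decentralized control of coupled
subsystems with control sharing": for the symmetric two-user multiaccess broadcast system
with arrival rate `p` satisfying `(1-p)² < p`, the values `J = Ap`, `v* = 2 - Ap`, `v⁰ = p`,
`vⁿ = Aⁿp` (n ≥ 1), `v^∞ = 1`, where `Aⁿp = 1 - (1-p)^{n+1}`, solve the average-reward
dynamic-programming fixed-point equations. -/
theorem MAB_DP_solution_case1 (p : ℝ) (hp0 : 0 < p) (hp1 : p ≤ 1)
    (hcase : (1 - p) ^ 2 < p) :
    let A : ℕ → ℝ := fun n => 1 - (1 - p) ^ (n + 1)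
    let J : ℝ := A 1
    let vs : ℝ := 2 - A 1
    let v0 : ℝ := p
    let v : ℕ → ℝ := fun n => A n
    let vinf : ℝ := 1
    (vs + J = max (1 + vinf) vs) ∧
    (v0 + J = max (p + v 1) (2 * p * (1 - p) + p ^ 2 * vs + (1 - p ^ 2) * v0)) ∧
    (∀ n : ℕ, 1 ≤ n →
      v n + J = max (p + v (n + 1)) (max (A n + v 1)
        (p + A n - 2 * p * A n + p * A n * vs + (1 - p * A n) * v0))) ∧
    (vinf + J = max (p + vinf) (max (1 + v 1) (1 - p + p * vs + (1 - p) * v0))) :=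
  MAB_DP_solution_case1_general p hp1 hcase
end
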